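/- arXiv:1712.01583 — 5 statements merged into one kernel-verified Lean document; each statement's English description precedes it below -/
import Mathlib

section
/- Let Γ be a finite simple graph, 𝒢 and ℋ sets of proper special subgroups of A_Γ with P(ℋ) ⊆ 𝒢 (every special subgroup contained in a member of ℋ lies in 𝒢). Define v ≤_𝒢 w iff v ≤ w in the standard order and every Δ with A_Δ ∈ 𝒢 containing v also contains w. Then for distinct vertices v, w with v ≤_Γ w, the transvection ρ^w_v preserves every member of 𝒢 (up to conjugacy) and acts trivially on every member of ℋ if and only if v ≤_𝒢 w. -/
/-! Basic definitions: right-angled Artin groups, special subgroups,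
relative automorphism notions, and graph-theoretic notions from
Day–Wade, "Relative automorphism groups of right-angled Artin groups". -/

namespace RAAGPaper

variable {V : Type}

open scoped commutatorElement in
/-- The commutator relations defining the RAAG on a simple graph. -/
def raagRels (G : SimpleGraph V) : Set (FreeGroup V) :=
  {r | ∃ v w : V, G.Adj v w ∧ r = ⁅FreeGroup.of v, FreeGroup.of w⁆}

/-- The right-angled Artin group on the graph `G`. -/
abbrev RAAG (G : SimpleGraph V) : Type := PresentedGroup (raagRels G)

/-- The generator of `RAAG G` corresponding to a vertex. -/
def gen (G : SimpleGraph V) (v : V) : RAAG G := PresentedGroup.of v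

/-- The special subgroup `A_Δ` generated by the vertices of a (full) subgraph `Δ`. -/
def sp (G : SimpleGraph V) (Δ : Set V) : Subgroup (RAAG G) :=
  Subgroup.closure (gen G '' Δ)

/-- The link of a vertex. -/
def lk (G : SimpleGraph V) (v : V) : Set V := {w | G.Adj v w}

/-- The star of a vertex. -/
def st (G : SimpleGraph V) (v : V) : Set V := insert v (lk G v)

/-- The standard (domination) order: `u ≤ v` iff `lk(u) ⊆ st(v)`. -/
def stdLE (G : SimpleGraph V) (u v : V) : Prop := lk G u ⊆ st G v

/-- An automorphism acts trivially on a subgroup if it agrees with an inner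
automorphism on that subgroup. -/
def ActsTrivially {A : Type*} [Group A] (φ : MulAut A) (H : Subgroup A) : Prop :=
  ∃ g : A, ∀ h ∈ H, φ h = g * h * g⁻¹

/-- An automorphism preserves a subgroup if it sends it to a conjugate of itself. -/
def Preserves {A : Type*} [Group A] (φ : MulAut A) (H : Subgroup A) : Prop :=
  ∃ g : A, Subgroup.map φ.toMonoidHom H = Subgroup.map (MulAut.conj g).toMonoidHom H

/-- `𝒢`-adjacency: adjacent in `G` or contained in a common member of `𝒢`. -/
def gAdj (G : SimpleGraph V) (calG : Set (Set V)) (u w : V) : Prop :=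
  G.Adj u w ∨ ∃ Δ ∈ calG, u ∈ Δ ∧ w ∈ Δ

/-- `𝒢`-reachability within a set `S` of vertices. -/
def gReach (G : SimpleGraph V) (calG : Set (Set V)) (S : Set V) : V → V → Prop :=
  Relation.ReflTransGen (fun a b => a ∈ S ∧ b ∈ S ∧ gAdj G calG a b)

/-- `K` is a union of `𝒢`-components of (the full subgraph on) `S`.
With `calG = ∅` this says `K` is a union of connected components of `S`. -/
def UnionOfComps (G : SimpleGraph V) (calG : Set (Set V)) (S K : Set V) : Prop :=
  K ⊆ S ∧ ∀ u ∈ K, ∀ w, gReach G calG S u w → w ∈ K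

/-- The members of `𝒢` not containing the vertex `x`. -/
def calGx (calG : Set (Set V)) (x : V) : Set (Set V) := {Δ ∈ calG | x ∉ Δ}

/-- The `𝒢`-order: `u ≤_𝒢 v` iff `u ≤ v` in the standard order and every member of
`𝒢` containing `u` also contains `v`. -/
def gLE (G : SimpleGraph V) (calG : Set (Set V)) (u v : V) : Prop :=
  stdLE G u v ∧ ∀ Δ ∈ calG, u ∈ Δ → v ∈ Δ

/-- `Δ` meets at most one `𝒢^x`-component of `Γ - st(x)`. -/
def MeetsAtMostOne (G : SimpleGraph V) (calG : Set (Set V)) (x : V) (Δ : Set V) : Prop :=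
  ∀ u w, u ∈ Δ → w ∈ Δ → u ∈ (st G x)ᶜ → w ∈ (st G x)ᶜ →
    gReach G (calGx calG x) ((st G x)ᶜ) u w

/-- `Δ` is upwards closed under the `𝒢`-order. -/
def UpClosed (G : SimpleGraph V) (calG : Set (Set V)) (Δ : Set V) : Prop :=
  ∀ v ∈ Δ, ∀ w, gLE G calG v w → w ∈ Δ

/-- `Δ` is not `𝒢`-star-separated by any outside vertex. -/
def NotStarSep (G : SimpleGraph V) (calG : Set (Set V)) (Δ : Set V) : Prop :=
  ∀ x, x ∉ Δ → MeetsAtMostOne G calG x Δ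

/-- All members of `calG` are proper (special) subgroups. -/
def Proper (calG : Set (Set V)) : Prop := ∀ Δ ∈ calG, Δ ≠ Set.univ

/-- Word length of an element of the RAAG with respect to the standard generators. -/
noncomputable def wordLength (G : SimpleGraph V) (g : RAAG G) : ℕ :=
  sInf {n | ∃ l : List (V × Bool), PresentedGroup.mk (raagRels G) (FreeGroup.mk l) = g ∧
    l.length = n}

/-- An element is cyclically reduced if it has minimal word length in its
conjugacy class. -/
noncomputable def CycRed (G : SimpleGraph V) (g : RAAG G) : Prop :=
  ∀ h : RAAG G, wordLength G g ≤ wordLength G (h * g * h⁻¹)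

/-- The link of `v` computed inside the full subgraph `Δ`. -/
def lkIn (G : SimpleGraph V) (Δ : Set V) (v : V) : Set V := {w ∈ Δ | G.Adj v w}

/-- The star of `v` computed inside the full subgraph `Δ`. -/
def stIn (G : SimpleGraph V) (Δ : Set V) (v : V) : Set V := insert v (lkIn G Δ v)

/-- Domination computed inside the full subgraph `Δ`. -/
def leIn (G : SimpleGraph V) (Δ : Set V) (u v : V) : Prop :=
  lkIn G Δ u ⊆ stIn G Δ v

/-- The induced peripheral structure `𝒢_Δ`: proper intersections of members of `𝒢`
with `Δ`. -/
def inducedG (calG : Set (Set V)) (Δ : Set V) : Set (Set V) :=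
  {Θ | ∃ Λ ∈ calG, Θ = Δ ∩ Λ ∧ Δ ∩ Λ ≠ Δ}

/-- `𝒢` is saturated: it contains every proper special subgroup invariant under
`Out⁰(A_Γ; 𝒢)`, where invariance is characterized by being upwards closed under
`≤_𝒢` and not `𝒢`-star-separated by an outside vertex. -/
def Saturated (G : SimpleGraph V) (calG : Set (Set V)) : Prop :=
  ∀ Δ : Set V, Δ ≠ Set.univ → UpClosed G calG Δ → NotStarSep G calG Δ → Δ ∈ calG

/-- `φ` is an inversion automorphism. -/
def IsInversion (G : SimpleGraph V) (φ : MulAut (RAAG G)) : Prop :=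
  ∃ v, φ (gen G v) = (gen G v)⁻¹ ∧ ∀ w, w ≠ v → φ (gen G w) = gen G w

/-- `φ` is a transvection. -/
def IsTransvection (G : SimpleGraph V) (φ : MulAut (RAAG G)) : Prop :=
  ∃ v w, v ≠ w ∧ stdLE G v w ∧ φ (gen G v) = gen G v * gen G w ∧
    ∀ u, u ≠ v → φ (gen G u) = gen G u

/-- `φ` is an extended partial conjugation. -/
def IsEPC (G : SimpleGraph V) (φ : MulAut (RAAG G)) : Prop :=
  ∃ x K, UnionOfComps G ∅ ((st G x)ᶜ) K ∧
    (∀ w ∈ K, φ (gen G w) = gen G x * gen G w * (gen G x)⁻¹) ∧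
    ∀ w ∉ K, φ (gen G w) = gen G w

/-- The subgroup `Aut⁰(A_Γ)` generated by inversions, transvections and extended
partial conjugations. -/
def Aut0 (G : SimpleGraph V) : Subgroup (MulAut (RAAG G)) :=
  Subgroup.closure {φ | IsInversion G φ ∨ IsTransvection G φ ∨ IsEPC G φ}

/-! If `v ∈ Δ` and `w ∉ Δ`, the exponent sum of `w` vanishes on `A_Δ` and on all its conjugates,
but not on `ρ(v) = vw`; so `ρ` cannot preserve `A_Δ`. Conversely, when every member of `𝒢`
containing `v` contains `w`, the transvection maps each `A_Δ`, `Δ ∈ 𝒢`, onto itself, and it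
fixes each `A_Λ`, `Λ ∈ ℋ`, pointwise: `v ∈ Λ` would put `{v}` in `𝒢`, forcing `w ∈ {v}`. -/

section Conjugation

variable {A : Type*} [Group A]

theorem preserves_of_map_eq {φ : MulAut A} {H : Subgroup A}
    (h : Subgroup.map φ.toMonoidHom H = H) : Preserves φ H :=
  ⟨1, by rw [h, map_one]; exact (Subgroup.map_id H).symm⟩

theorem actsTrivially_closure_of_forall_apply_eq {φ : MulAut A} {s : Set A}
    (h : ∀ a ∈ s, φ a = a) : ActsTrivially φ (Subgroup.closure s) :=
  ⟨1, fun a ha => by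
    rw [inv_one, one_mul, mul_one]
    exact MonoidHom.eqOn_closure (f := φ.toMonoidHom) (g := MonoidHom.id A) h ha⟩

theorem Preserves.apply_mem_ker {B : Type*} [CommGroup B] {φ : MulAut A} {H : Subgroup A}
    (hφ : Preserves φ H) (χ : A →* B) (hH : H ≤ χ.ker) {a : A} (ha : a ∈ H) :
    φ a ∈ χ.ker := by
  obtain ⟨g, hg⟩ := hφ
  obtain ⟨b, hb, hba⟩ : φ a ∈ Subgroup.map (MulAut.conj g).toMonoidHom H :=
    hg ▸ ⟨a, ha, rfl⟩
  rw [← hba, MonoidHom.mem_ker]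
  simp only [MulEquiv.coe_toMonoidHom, MulAut.conj_apply, map_mul, map_inv,
    mul_inv_cancel_comm]
  exact hH hb

end Conjugation

open Classical in
noncomputable def exponentSum (G : SimpleGraph V) (w : V) : RAAG G →* Multiplicative ℤ :=
  PresentedGroup.toGroup (f := fun u => if u = w then Multiplicative.ofAdd 1 else 1) (by
    rintro r ⟨a, b, -, rfl⟩
    rw [map_commutatorElement]
    exact commutatorElement_eq_one_iff_commute.mpr (Commute.all _ _))

open Classical in
theorem exponentSum_gen (G : SimpleGraph V) (w u : V) :
    exponentSum G w (gen G u) = if u = w then Multiplicative.ofAdd 1 else 1 :=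
  PresentedGroup.toGroup.of _

theorem sp_le_ker_exponentSum (G : SimpleGraph V) {w : V} {Δ : Set V} (hw : w ∉ Δ) :
    sp G Δ ≤ (exponentSum G w).ker := by
  refine (Subgroup.closure_le _).mpr ?_
  rintro _ ⟨u, hu, rfl⟩
  rw [SetLike.mem_coe, MonoidHom.mem_ker, exponentSum_gen, if_neg (ne_of_mem_of_not_mem hu hw)]

section Transvection

variable {G : SimpleGraph V} {v w : V} {ρ : MulAut (RAAG G)}

theorem mem_of_preserves_sp (hvw : v ≠ w) (h1 : ρ (gen G v) = gen G v * gen G w)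
    {Δ : Set V} (hρ : Preserves ρ (sp G Δ)) (hv : v ∈ Δ) : w ∈ Δ := by
  by_contra hw
  have hker := hρ.apply_mem_ker _ (sp_le_ker_exponentSum G hw)
    (Subgroup.subset_closure ⟨v, hv, rfl⟩)
  rw [h1, MonoidHom.mem_ker, map_mul, exponentSum_gen, exponentSum_gen, if_neg hvw, if_pos rfl,
    one_mul] at hker
  exact absurd hker (by decide)

theorem map_sp_eq_self (hvw : v ≠ w) (h1 : ρ (gen G v) = gen G v * gen G w)
    (h2 : ∀ u, u ≠ v → ρ (gen G u) = gen G u) {Δ : Set V} (hΔ : v ∈ Δ → w ∈ Δ) :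
    Subgroup.map ρ.toMonoidHom (sp G Δ) = sp G Δ := by
  have mem_sp : ∀ u ∈ Δ, gen G u ∈ sp G Δ := fun u hu => Subgroup.subset_closure ⟨u, hu, rfl⟩
  apply le_antisymm
  · rw [sp, MonoidHom.map_closure, Subgroup.closure_le]
    rintro _ ⟨_, ⟨u, hu, rfl⟩, rfl⟩
    obtain rfl | huv := eq_or_ne u v
    · show ρ (gen G u) ∈ sp G Δ
      rw [h1]
      exact mul_mem (mem_sp u hu) (mem_sp w (hΔ hu))
    · show ρ (gen G u) ∈ sp G Δ
      rw [h2 u huv]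
      exact mem_sp u hu
  · rw [sp, Subgroup.closure_le]
    rintro _ ⟨u, hu, rfl⟩
    obtain rfl | huv := eq_or_ne u v
    · -- `u = ρ(u w⁻¹)`, since `ρ` fixes `w`
      refine ⟨gen G u * (gen G w)⁻¹, mul_mem (mem_sp u hu) (inv_mem (mem_sp w (hΔ hu))), ?_⟩
      simp [h1, h2 w hvw.symm]
    · exact ⟨gen G u, mem_sp u hu, h2 u huv⟩

theorem actsTrivially_sp_of_notMem (h2 : ∀ u, u ≠ v → ρ (gen G u) = gen G u) {Λ : Set V}
    (hv : v ∉ Λ) : ActsTrivially ρ (sp G Λ) := by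
  refine actsTrivially_closure_of_forall_apply_eq ?_
  rintro _ ⟨u, hu, rfl⟩
  exact h2 u (ne_of_mem_of_not_mem hu hv)

end Transvection

theorem transvection_in_relative_group_iff_general (G : SimpleGraph V)
    (calG calH : Set (Set V))
    (hPH : ∀ Δ : Set V, (∃ Λ ∈ calH, Δ ⊆ Λ) → Δ ∈ calG)
    (v w : V) (hvw : v ≠ w) (hle : stdLE G v w)
    (ρ : MulAut (RAAG G))
    (h1 : ρ (gen G v) = gen G v * gen G w)
    (h2 : ∀ u, u ≠ v → ρ (gen G u) = gen G u) :
    ((∀ Δ ∈ calG, Preserves ρ (sp G Δ)) ∧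
      (∀ Λ ∈ calH, ActsTrivially ρ (sp G Λ))) ↔ gLE G calG v w := by
  constructor
  · rintro ⟨hG, -⟩
    exact ⟨hle, fun Δ hΔ => mem_of_preserves_sp hvw h1 (hG Δ hΔ)⟩
  · rintro ⟨-, hOrd⟩
    refine ⟨fun Δ hΔ => preserves_of_map_eq (map_sp_eq_self hvw h1 h2 (hOrd Δ hΔ)),
      fun Λ hΛ => actsTrivially_sp_of_notMem h2 fun hv => ?_⟩
    have hsingleton : ({v} : Set V) ∈ calG := hPH {v} ⟨Λ, hΛ, Set.singleton_subset_iff.mpr hv⟩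
    exact hvw (hOrd {v} hsingleton rfl).symm

/-- Assuming `P(ℋ) ⊆ 𝒢`, a transvection `ρ^w_v` preserves each
member of `𝒢` and acts trivially on each member of `ℋ` iff `v ≤_𝒢 w`. -/
theorem transvection_in_relative_group_iff [Fintype V] (G : SimpleGraph V)
    (calG calH : Set (Set V)) (hpropG : Proper calG) (hpropH : Proper calH)
    (hPH : ∀ Δ : Set V, (∃ Λ ∈ calH, Δ ⊆ Λ) → Δ ∈ calG)
    (v w : V) (hvw : v ≠ w) (hle : stdLE G v w)
    (ρ : MulAut (RAAG G))
    (h1 : ρ (gen G v) = gen G v * gen G w)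
    (h2 : ∀ u, u ≠ v → ρ (gen G u) = gen G u) :
    ((∀ Δ ∈ calG, Preserves ρ (sp G Δ)) ∧
      (∀ Λ ∈ calH, ActsTrivially ρ (sp G Λ))) ↔ gLE G calG v w :=
  transvection_in_relative_group_iff_general G calG calH hPH v w hvw hle ρ h1 h2

end RAAGPaper
end

section
/- Let Γ be a finite simple graph and 𝒢 a set of proper special subgroups. Suppose Δ₁ and Δ₂ are full subgraphs each satisfying: (a) for all vertices v ∈ Δᵢ and all w with v ≤_𝒢 w, also w ∈ Δᵢ; and (b) for every vertex x ∉ Δᵢ, Δᵢ intersects at most one 𝒢^x-component of Γ − st(x). Then the intersection Δ₁ ∩ Δ₂ also satisfies (a) and (b). -/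
/-! Basic definitions: right-angled Artin groups, special subgroups,
relative automorphism notions, and graph-theoretic notions from
Day–Wade, "Relative automorphism groups of right-angled Artin groups". -/

namespace RAAGPaper

variable {V : Type}

theorem MeetsAtMostOne.mono {G : SimpleGraph V} {calG : Set (Set V)} {x : V}
    {Δ Δ' : Set V} (h : MeetsAtMostOne G calG x Δ) (hsub : Δ' ⊆ Δ) :
    MeetsAtMostOne G calG x Δ' :=
  fun u w hu hw => h u w (hsub hu) (hsub hw)

section Inter

variable {G : SimpleGraph V} {calG : Set (Set V)} {Δ₁ Δ₂ : Set V}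

theorem UpClosed.inter (h₁ : UpClosed G calG Δ₁) (h₂ : UpClosed G calG Δ₂) :
    UpClosed G calG (Δ₁ ∩ Δ₂) :=
  fun v hv w hle => ⟨h₁ v hv.1 w hle, h₂ v hv.2 w hle⟩

theorem NotStarSep.inter (h₁ : NotStarSep G calG Δ₁) (h₂ : NotStarSep G calG Δ₂) :
    NotStarSep G calG (Δ₁ ∩ Δ₂) := by
  intro x hx
  rcases not_and_or.mp hx with hx₁ | hx₂
  · exact (h₁ x hx₁).mono Set.inter_subset_left
  · exact (h₂ x hx₂).mono Set.inter_subset_right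

end Inter

theorem invariance_conditions_inter_general (G : SimpleGraph V)
    (calG : Set (Set V)) (Δ₁ Δ₂ : Set V)
    (h1 : UpClosed G calG Δ₁ ∧ NotStarSep G calG Δ₁)
    (h2 : UpClosed G calG Δ₂ ∧ NotStarSep G calG Δ₂) :
    UpClosed G calG (Δ₁ ∩ Δ₂) ∧ NotStarSep G calG (Δ₁ ∩ Δ₂) :=
  ⟨h1.1.inter h2.1, h1.2.inter h2.2⟩

/-- The invariance conditions (upwards closure under `≤_𝒢` and
not being `𝒢`-star-separated by an outside vertex) are preserved by
intersections. -/
theorem invariance_conditions_inter [Fintype V] (G : SimpleGraph V)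
    (calG : Set (Set V)) (hprop : Proper calG) (Δ₁ Δ₂ : Set V)
    (h1 : UpClosed G calG Δ₁ ∧ NotStarSep G calG Δ₁)
    (h2 : UpClosed G calG Δ₂ ∧ NotStarSep G calG Δ₂) :
    UpClosed G calG (Δ₁ ∩ Δ₂) ∧ NotStarSep G calG (Δ₁ ∩ Δ₂) :=
  invariance_conditions_inter_general G calG Δ₁ Δ₂ h1 h2

end RAAGPaper
end

section
/- Let Γ be a finite simple graph and 𝒢 a set of proper special subgroups. If Δ is a 𝒢-component of Γ containing at least two vertices, then Δ is upwards closed under ≤_𝒢 (v ∈ Δ and v ≤_𝒢 w implies w ∈ Δ) and for every vertex x ∉ Δ, Δ intersects at most one 𝒢^x-component of Γ − st(x). -/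
/-! Basic definitions: right-angled Artin groups, special subgroups,
relative automorphism notions, and graph-theoretic notions from
Day–Wade, "Relative automorphism groups of right-angled Artin groups". -/

namespace RAAGPaper

variable {V : Type}

theorem exists_gAdj_of_gReach_ne {G : SimpleGraph V} {calG : Set (Set V)} {S : Set V}
    {v t : V} (h : gReach G calG S v t) (hne : t ≠ v) : ∃ u, gAdj G calG v u := by
  rcases Relation.ReflTransGen.cases_head h with rfl | ⟨u, ⟨-, -, hvu⟩, -⟩
  · exact absurd rfl hne
  · exact ⟨u, hvu⟩

namespace UnionOfComps

variable {G : SimpleGraph V} {calG : Set (Set V)} {Δ : Set V}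

theorem mem_of_gAdj (hcomp : UnionOfComps G calG Set.univ Δ)
    {a b : V} (ha : a ∈ Δ) (hab : gAdj G calG a b) : b ∈ Δ :=
  hcomp.2 a ha b (.single ⟨trivial, trivial, hab⟩)

/-- `u` lies in `lk v ⊆ st w`, or shares a member of `𝒢` with `v` and hence with `w`. -/
theorem mem_of_gLE (hcomp : UnionOfComps G calG Set.univ Δ)
    {v u w : V} (hv : v ∈ Δ) (hvu : gAdj G calG v u)
    (hvw : gLE G calG v w) : w ∈ Δ := by
  have hu : u ∈ Δ := hcomp.mem_of_gAdj hv hvu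
  rcases hvu with hadj | ⟨Λ, hΛ, hvΛ, huΛ⟩
  · rcases hvw.1 hadj with rfl | huw
    · exact hu
    · exact hcomp.mem_of_gAdj hu (.inl (G.adj_symm huw))
  · exact hcomp.mem_of_gAdj hu (.inr ⟨Λ, hΛ, huΛ, hvw.2 Λ hΛ hvΛ⟩)

theorem upClosed (hcomp : UnionOfComps G calG Set.univ Δ)
    (hconn : ∀ u ∈ Δ, ∀ w ∈ Δ, gReach G calG Set.univ u w)
    (htwo : ∃ a ∈ Δ, ∃ b ∈ Δ, a ≠ b) : UpClosed G calG Δ := by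
  intro v hv w hvw
  obtain ⟨t, ht, htv⟩ := Set.Nontrivial.exists_ne htwo v
  obtain ⟨u, hvu⟩ := exists_gAdj_of_gReach_ne (hconn v hv t ht) htv
  exact hcomp.mem_of_gLE hv hvu hvw

theorem notMem_st (hcomp : UnionOfComps G calG Set.univ Δ)
    {x a : V} (hx : x ∉ Δ) (ha : a ∈ Δ) : a ∉ st G x := by
  rintro (rfl | hxa)
  · exact hx ha
  · exact hx (hcomp.mem_of_gAdj ha (.inl (G.adj_symm hxa)))

/-- A member of `𝒢` through a vertex of `Δ` is contained in `Δ`, so it avoids `x`. -/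
theorem gAdj_calGx (hcomp : UnionOfComps G calG Set.univ Δ)
    {x a b : V} (hx : x ∉ Δ) (ha : a ∈ Δ) (hab : gAdj G calG a b) :
    gAdj G (calGx calG x) a b := by
  rcases hab with hadj | ⟨Λ, hΛ, haΛ, hbΛ⟩
  · exact .inl hadj
  · exact .inr ⟨Λ, ⟨hΛ, fun hxΛ => hx (hcomp.mem_of_gAdj ha (.inr ⟨Λ, hΛ, haΛ, hxΛ⟩))⟩,
      haΛ, hbΛ⟩

theorem gReach_calGx (hcomp : UnionOfComps G calG Set.univ Δ)
    {x u w : V} (hx : x ∉ Δ) (hu : u ∈ Δ)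
    (huw : gReach G calG Set.univ u w) : gReach G (calGx calG x) (st G x)ᶜ u w := by
  induction huw with
  | refl => exact .refl
  | @tail p q hup hpq ih =>
    have hp : p ∈ Δ := hcomp.2 u hu p hup
    have hq : q ∈ Δ := hcomp.mem_of_gAdj hp hpq.2.2
    exact ih.tail ⟨hcomp.notMem_st hx hp, hcomp.notMem_st hx hq,
      hcomp.gAdj_calGx hx hp hpq.2.2⟩

theorem notStarSep (hcomp : UnionOfComps G calG Set.univ Δ)
    (hconn : ∀ u ∈ Δ, ∀ w ∈ Δ, gReach G calG Set.univ u w) :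
    NotStarSep G calG Δ :=
  fun _ hx u w hu hw _ _ => hcomp.gReach_calGx hx hu (hconn u hu w hw)

end UnionOfComps

theorem g_component_invariant_general (G : SimpleGraph V)
    (calG : Set (Set V)) (Δ : Set V)
    (hcomp : UnionOfComps G calG Set.univ Δ)
    (hconn : ∀ u ∈ Δ, ∀ w ∈ Δ, gReach G calG Set.univ u w)
    (htwo : ∃ a ∈ Δ, ∃ b ∈ Δ, a ≠ b) :
    UpClosed G calG Δ ∧ NotStarSep G calG Δ :=
  ⟨hcomp.upClosed hconn htwo, hcomp.notStarSep hconn⟩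

/-- A `𝒢`-component of `Γ` with at least two vertices is upwards
closed under `≤_𝒢` and not `𝒢`-star-separated by any outside vertex. -/
theorem g_component_invariant [Fintype V] (G : SimpleGraph V)
    (calG : Set (Set V)) (hprop : Proper calG) (Δ : Set V)
    (hcomp : UnionOfComps G calG Set.univ Δ)
    (hconn : ∀ u ∈ Δ, ∀ w ∈ Δ, gReach G calG Set.univ u w)
    (htwo : ∃ a ∈ Δ, ∃ b ∈ Δ, a ≠ b) :
    UpClosed G calG Δ ∧ NotStarSep G calG Δ :=
  g_component_invariant_general G calG Δ hcomp hconn htwo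

end RAAGPaper
end

section
/- Let Γ be a finite simple graph whose vertices are totally ordered compatibly with the standard order (v_i ≤_Γ v_j implies i ≤ j), with equivalent vertices consecutive. Then the image of Aut⁰(A_Γ) under the homomorphism to GL(n,ℤ) induced by the action on the abelianization consists of block lower-triangular matrices with respect to the blocks given by the equivalence classes of vertices. -/
/-! Basic definitions: right-angled Artin groups, special subgroups,
relative automorphism notions, and graph-theoretic notions from
Day–Wade, "Relative automorphism groups of right-angled Artin groups". -/

namespace RAAGPaper

variable {V : Type}

/-!
For every set `U` of vertices that is upward closed in the standard order, the action of
`Aut⁰(A_Γ)` on the abelianization `ℤ^V` preserves the vectors supported in `U`. It suffices to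
check this on generators: inversions and partial conjugations act diagonally with entries `±1`,
and the transvection `v ↦ vw` adds the `v`-coordinate to the `w`-coordinate, which is harmless
since `v ≤ w` puts `w` in every up-closed set containing `v`. Taking `U = {u | v ≤ u}` shows
that the image of `v` has no component at any `u` with `v ≰ u`.
-/

open Pointwise

theorem stdLE_refl (G : SimpleGraph V) (u : V) : stdLE G u u :=
  fun _ hx => Set.mem_insert_of_mem _ hx

theorem stdLE_trans (G : SimpleGraph V) {u v w : V} (huv : stdLE G u v) (hvw : stdLE G v w) :
    stdLE G u w := by
  intro x hx
  rcases huv hx with rfl | hvx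
  · rcases hvw hx.symm with rfl | hwu
    · exact Set.mem_insert_of_mem _ hx
    · rcases huv hwu.symm with rfl | hxw
      · exact Set.mem_insert _ _
      · exact Set.mem_insert_of_mem _ hxw.symm
  · exact hvw hvx

theorem mulAut_mem_stabilizer_iff {A : Type*} [Group A] {ψ : MulAut A} {H : Subgroup A} :
    ψ ∈ MulAction.stabilizer (MulAut A) H ↔ ∀ a, ψ a ∈ H ↔ a ∈ H := by
  rw [MulAction.mem_stabilizer_iff, SetLike.ext_iff]
  simp only [Subgroup.mem_pointwise_smul_iff_inv_smul_mem, MulAut.smul_def]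
  constructor
  · intro h a
    simpa using (h (ψ a)).symm
  · intro h x
    simpa using (h (ψ⁻¹ x)).symm

theorem mem_stabilizer_comap_of_apply_eq {A B : Type*} [Group A] [Group B] (f : A →* B)
    {W : Subgroup B} {ψ : MulAut A} (L : B → B) (hL : ∀ a, f (ψ a) = L (f a))
    (hW : ∀ b, L b ∈ W ↔ b ∈ W) : ψ ∈ MulAction.stabilizer (MulAut A) (W.comap f) :=
  mulAut_mem_stabilizer_iff.2 fun a => by simp only [Subgroup.mem_comap, hL, hW]

section SupportedIn

variable {M : Type*} [AddGroup M] {U : Set V}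

def supportedIn (U : Set V) : AddSubgroup (V → M) :=
  AddSubgroup.pi Uᶜ fun _ => ⊥

theorem mem_supportedIn {f : V → M} :
    f ∈ supportedIn U ↔ ∀ u ∉ U, f u = 0 := by
  simp [supportedIn, AddSubgroup.mem_pi]

theorem mul_mem_supportedIn_iff {R : Type*} [Ring R] [NoZeroDivisors R] {c : V → R}
    (hc : ∀ u, c u ≠ 0) {f : V → R} :
    c * f ∈ supportedIn U ↔ f ∈ supportedIn U := by
  simp only [mem_supportedIn, Pi.mul_apply, mul_eq_zero, hc, false_or]

theorem add_single_mem_supportedIn_iff [DecidableEq V] {v w : V} (hvw : v ≠ w)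
    (hU : v ∈ U → w ∈ U) {f : V → M} :
    f + Pi.single w (f v) ∈ supportedIn U ↔ f ∈ supportedIn U := by
  have hfv : (f + Pi.single w (f v) : V → M) v = f v := by simp [Pi.single_eq_of_ne hvw]
  by_cases hw : w ∈ U
  · refine add_mem_cancel_right (mem_supportedIn.2 fun u hu => ?_)
    exact Pi.single_eq_of_ne (ne_of_mem_of_not_mem hw hu).symm _
  · have hv : v ∉ U := mt hU hw
    constructor
    · intro h
      have h0 : f v = 0 := hfv ▸ mem_supportedIn.1 h v hv
      rwa [h0, Pi.single_zero, add_zero] at h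
    · intro h
      rwa [mem_supportedIn.1 h v hv, Pi.single_zero, add_zero]

end SupportedIn

theorem apply_eq_of_apply_gen {G : SimpleGraph V} {B : Type*} [Group B] (f : RAAG G →* B)
    {φ : MulAut (RAAG G)} (L : B →* B) (h : ∀ v, f (φ (gen G v)) = L (f (gen G v)))
    (g : RAAG G) : f (φ g) = L (f g) :=
  DFunLike.congr_fun (PresentedGroup.ext (φ := f.comp φ.toMonoidHom) (ψ := L.comp f) h) g

section Abelianization

variable {G : SimpleGraph V} (ab : RAAG G →* Multiplicative (V → ℤ))

def abSupportedIn (U : Set V) : Subgroup (RAAG G) :=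
  (supportedIn U).toSubgroup.comap ab

-- With `𝒢 = ∅` the `𝒢`-order is the standard order, so `UpClosed G ∅` means upward closed.
def abFiltrationStabilizer : Subgroup (MulAut (RAAG G)) :=
  ⨅ (U : Set V) (_ : UpClosed G ∅ U),
    MulAction.stabilizer (MulAut (RAAG G)) (abSupportedIn ab U)

variable [DecidableEq V] {ab}
  (hab : ∀ u : V, ab (gen G u) = Multiplicative.ofAdd (Pi.single u 1))
include hab

theorem mem_abFiltrationStabilizer_of_toAdd_apply_gen {φ : MulAut (RAAG G)}
    (L : (V → ℤ) →+ (V → ℤ))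
    (hL : ∀ v, Multiplicative.toAdd (ab (φ (gen G v))) = L (Pi.single v 1))
    (hLU : ∀ U, UpClosed G ∅ U → ∀ f, L f ∈ supportedIn U ↔ f ∈ supportedIn U) :
    φ ∈ abFiltrationStabilizer ab := by
  simp only [abFiltrationStabilizer, Subgroup.mem_iInf]
  refine fun U hU => mem_stabilizer_comap_of_apply_eq ab L.toMultiplicative
    (apply_eq_of_apply_gen ab _ fun v => ?_) fun b => hLU U hU b.toAdd
  rw [hab]
  exact hL v

theorem IsInversion.mem_abFiltrationStabilizer {φ : MulAut (RAAG G)} (hφ : IsInversion G φ) :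
    φ ∈ abFiltrationStabilizer ab := by
  obtain ⟨v, hv, hfix⟩ := hφ
  let c : V → ℤ := Function.update 1 v (-1)
  have hc : ∀ u, c u ≠ 0 := fun u => by
    by_cases hu : u = v <;> simp [c, hu]
  refine mem_abFiltrationStabilizer_of_toAdd_apply_gen hab (AddMonoidHom.mulLeft c)
    (fun u => ?_) fun _ _ _ => mul_mem_supportedIn_iff hc
  rw [AddMonoidHom.coe_mulLeft, ← Pi.single_mul_right]
  by_cases hu : u = v
  · subst hu
    simp [hv, hab, c, Pi.single_neg]
  · simp [hfix u hu, hab, c, hu]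

theorem IsTransvection.mem_abFiltrationStabilizer {φ : MulAut (RAAG G)}
    (hφ : IsTransvection G φ) : φ ∈ abFiltrationStabilizer ab := by
  obtain ⟨v, w, hvw, hle, hv, hfix⟩ := hφ
  refine mem_abFiltrationStabilizer_of_toAdd_apply_gen hab
    (.id _ + (AddMonoidHom.single _ w).comp (Pi.evalAddMonoidHom _ v)) (fun u => ?_)
    fun U hU _ => add_single_mem_supportedIn_iff hvw fun hvU => hU v hvU w ⟨hle, by simp⟩
  by_cases hu : u = v
  · subst hu
    simp [hv, hab]
  · simp [hfix u hu, hab, Pi.single_eq_of_ne (Ne.symm hu)]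

theorem IsEPC.mem_abFiltrationStabilizer {φ : MulAut (RAAG G)} (hφ : IsEPC G φ) :
    φ ∈ abFiltrationStabilizer ab := by
  obtain ⟨x, K, -, hK, hfix⟩ := hφ
  refine mem_abFiltrationStabilizer_of_toAdd_apply_gen hab (.id _) (fun u => ?_)
    fun _ _ _ => Iff.rfl
  by_cases hu : u ∈ K
  · simp [hK u hu, hab]
  · simp [hfix u hu, hab]

theorem aut0_le_abFiltrationStabilizer : Aut0 G ≤ abFiltrationStabilizer ab :=
  Subgroup.closure_le _ |>.2 fun _ hφ => hφ.elim (·.mem_abFiltrationStabilizer hab)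
    (·.elim (·.mem_abFiltrationStabilizer hab) (·.mem_abFiltrationStabilizer hab))

theorem toAdd_apply_gen_eq_zero {φ : MulAut (RAAG G)} (hφ : φ ∈ abFiltrationStabilizer ab)
    {u v : V} (huv : ¬ stdLE G v u) : Multiplicative.toAdd (ab (φ (gen G v))) u = 0 := by
  have hup : UpClosed G ∅ {w | stdLE G v w} := fun _ hv _ hle => stdLE_trans G hv hle.1
  have hgen : gen G v ∈ abSupportedIn ab {w | stdLE G v w} := by
    simpa [abSupportedIn, hab, mem_supportedIn, Pi.single_apply] using
      fun w hw hwv => hw (hwv ▸ stdLE_refl G v)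
  have hstab := Subgroup.mem_iInf.1 (Subgroup.mem_iInf.1 hφ _) hup
  exact mem_supportedIn.1 ((mulAut_mem_stabilizer_iff.1 hstab _).2 hgen) u huv

end Abelianization

theorem aut0_block_lower_triangular_general {n : ℕ} [DecidableEq V]
    (G : SimpleGraph V) (e : Fin n ≃ V)
    (ab : RAAG G →* Multiplicative (V → ℤ))
    (hab : ∀ u : V, ab (gen G u) = Multiplicative.ofAdd (Pi.single u 1)) :
    ∀ φ ∈ Aut0 G, ∀ i j : Fin n, ¬ stdLE G (e j) (e i) →
      Multiplicative.toAdd (ab (φ (gen G (e j)))) (e i) = 0 :=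
  fun _ hφ _ _ hij => toAdd_apply_gen_eq_zero hab (aut0_le_abFiltrationStabilizer hab hφ) hij

/-- With the vertices ordered compatibly with the standard
order (and equivalent vertices consecutive), the action of `Aut⁰(A_Γ)` on the
abelianization is by block lower-triangular matrices: the matrix entry in row `i`
and column `j` vanishes unless `v_j ≤_Γ v_i`. -/
theorem aut0_block_lower_triangular {n : ℕ} [Fintype V] [DecidableEq V]
    (G : SimpleGraph V) (e : Fin n ≃ V)
    (hord : ∀ i j : Fin n, stdLE G (e i) (e j) → (i ≤ j ∨ stdLE G (e j) (e i)))
    (hconsec : ∀ i j k : Fin n, i ≤ j → j ≤ k →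
      stdLE G (e i) (e k) → stdLE G (e k) (e i) →
      (stdLE G (e i) (e j) ∧ stdLE G (e j) (e i)))
    (ab : RAAG G →* Multiplicative (V → ℤ))
    (hab : ∀ u : V, ab (gen G u) = Multiplicative.ofAdd (Pi.single u 1)) :
    ∀ φ ∈ Aut0 G, ∀ i j : Fin n, ¬ stdLE G (e j) (e i) →
      Multiplicative.toAdd (ab (φ (gen G (e j)))) (e i) = 0 :=
  aut0_block_lower_triangular_general G e ab hab

end RAAGPaper
end

section
/- Let Γ be a finite simple graph with nontrivial center Z = Z(Γ) (the set of vertices adjacent to all other vertices), Z ≠ Γ, and let Δ = Γ − Z. Then the quotient map A_Γ → A_Γ/⟨⟨A_Z⟩⟩ ≅ A_Δ is well defined, and every automorphism of A_Γ induces an automorphism of A_Δ; moreover the resulting projection map P_Δ : Out(A_Γ) → Out(A_Δ) is a surjective group homomorphism admitting a splitting given by extending automorphisms of A_Δ to fix each vertex of Z. -/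
/-!
Every vertex of `Z` is adjacent to all other vertices, so `A_Γ ≅ A_Δ × A_Z`; the splitting is
`ψ ↦ ψ × id` and the projection is the first factor. The point is that `A_Z` is the whole centre
of `A_Γ`, hence characteristic, so every automorphism descends to `A_Γ / A_Z ≅ A_Δ`. This needs
`Z(A_Δ) = 1`. Every vertex `v` of `Δ` has a non-neighbour in `Δ`, so `A_Δ` is a nontrivial
amalgam `A_{st v} *_{A_{lk v}} A_{Δ - v}`, whose centre lies in `A_{lk v}` by the normal form
theorem. A central element lies in `A_S` for some finite `S`, hence in
`A_{S ∩ ⋂_{v ∈ S} lk v} = A_∅ = 1`, because special subgroups intersect like their vertex sets.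
-/

namespace Monoid.PushoutI

open CoprodI NormalWord

variable {ι : Type*} {G : ι → Type*} [∀ i, Group (G i)] {H : Type*} [Group H]
  {φ : ∀ i, H →* G i}

variable (φ) in
def listProd (l : List (Σ i, G i)) : PushoutI φ :=
  (l.map fun p => of p.1 p.2).prod

@[simp] lemma listProd_nil : listProd φ ([] : List (Σ i, G i)) = 1 := rfl

@[simp] lemma listProd_cons (p : Σ i, G i) (l : List (Σ i, G i)) :
    listProd φ (p :: l) = of p.1 p.2 * listProd φ l := by
  simp [listProd]

@[simp] lemma listProd_append (l₁ l₂ : List (Σ i, G i)) :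
    listProd φ (l₁ ++ l₂) = listProd φ l₁ * listProd φ l₂ := by
  simp [listProd]

lemma ofCoprodI_word_prod (w : Word G) : ofCoprodI w.prod = listProd φ w.toList := by
  simp [Word.prod, listProd, map_list_prod, Function.comp_def]

variable (φ) in
def IsReducedList (l : List (Σ i, G i)) : Prop :=
  l.IsChain (fun p q => p.1 ≠ q.1) ∧ ∀ p ∈ l, p.2 ∉ (φ p.1).range

namespace IsReducedList

variable {l : List (Σ i, G i)}

lemma cons {p : Σ i, G i} (hl : IsReducedList φ l) (hp : p.2 ∉ (φ p.1).range)
    (hne : ∀ q ∈ l.head?, p.1 ≠ q.1) : IsReducedList φ (p :: l) :=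
  ⟨hl.1.cons hne, List.forall_mem_cons.2 ⟨hp, hl.2⟩⟩

lemma concat {p : Σ i, G i} (hl : IsReducedList φ l) (hp : p.2 ∉ (φ p.1).range)
    (hne : ∀ q ∈ l.getLast?, q.1 ≠ p.1) : IsReducedList φ (l ++ [p]) :=
  ⟨hl.1.append (.singleton p) (by simpa using hne), by
    simpa [or_imp, forall_and] using And.intro (fun q hq => hl.2 q hq) hp⟩

lemma dropLast (hl : IsReducedList φ l) : IsReducedList φ l.dropLast :=
  ⟨hl.1.dropLast, fun p hp => hl.2 p (List.dropLast_subset l hp)⟩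

lemma base_mul_head {i : ι} {g : G i} (h : H) (hl : IsReducedList φ (⟨i, g⟩ :: l)) :
    IsReducedList φ (⟨i, φ i h * g⟩ :: l) := by
  obtain ⟨hhead, htail⟩ := List.isChain_cons.1 hl.1
  obtain ⟨hg, hl⟩ := List.forall_mem_cons.1 hl.2
  exact ⟨htail.cons hhead, List.forall_mem_cons.2
    ⟨fun hr => hg ((mul_mem_cancel_left (MonoidHom.mem_range.2 ⟨h, rfl⟩)).1 hr), hl⟩⟩

theorem map_fst_eq (hφ : ∀ i, Function.Injective (φ i)) {l₁ l₂ : List (Σ i, G i)}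
    (h₁ : IsReducedList φ l₁) (h₂ : IsReducedList φ l₂) (h : listProd φ l₁ = listProd φ l₂) :
    l₁.map Sigma.fst = l₂.map Sigma.fst := by
  obtain ⟨d⟩ := transversal_nonempty φ hφ
  let toWord (l : List (Σ i, G i)) (hl : IsReducedList φ l) : Word G :=
    ⟨l, fun p hp h1 => hl.2 p hp (h1 ▸ one_mem _), hl.1⟩
  obtain ⟨w₁, hw₁, hm₁⟩ := Reduced.exists_normalWord_prod_eq d (w := toWord l₁ h₁) h₁.2
  obtain ⟨w₂, hw₂, hm₂⟩ := Reduced.exists_normalWord_prod_eq d (w := toWord l₂ h₂) h₂.2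
  rw [ofCoprodI_word_prod] at hw₁ hw₂
  have hw : w₁ = w₂ := prod_injective (by rw [hw₁, hw₂, h])
  rw [← hm₁, ← hm₂, hw]

end IsReducedList

lemma NormalWord.snd_notMem_range {d : Transversal φ} (w : NormalWord d) {p : Σ i, G i}
    (hp : p ∈ w.toList) : p.2 ∉ (φ p.1).range := fun hr =>
  w.ne_one p hp <| by
    rw [← (d.compl p.1).equiv_snd_eq_self_iff_mem (one_mem _) |>.2 (w.normalized p.1 p.2 hp)]
    exact ((d.compl p.1).coe_equiv_snd_eq_one_iff_mem (d.one_mem p.1)).2 hr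

theorem mem_range_base_or_exists_isReducedList (hφ : ∀ i, Function.Injective (φ i))
    (x : PushoutI φ) :
    x ∈ (base φ).range ∨ ∃ p l, IsReducedList φ (p :: l) ∧ listProd φ (p :: l) = x := by
  classical
  obtain ⟨d⟩ := transversal_nonempty φ hφ
  set w := NormalWord.equiv (d := d) x
  have hx : base φ w.head * listProd φ w.toList = x := by
    rw [← ofCoprodI_word_prod]
    exact NormalWord.equiv.symm_apply_apply x
  have hw : IsReducedList φ w.toList := ⟨w.chain_ne, fun p hp => w.snd_notMem_range hp⟩
  rcases hl : w.toList with _ | ⟨⟨i, g⟩, l⟩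
  · exact .inl ⟨w.head, by simpa [hl] using hx⟩
  · refine .inr ⟨⟨i, φ i w.head * g⟩, l, (hl ▸ hw).base_mul_head w.head, ?_⟩
    rw [← hx, hl, listProd_cons, listProd_cons, map_mul, ← mul_assoc, of_apply_eq_base]

theorem mem_range_base_of_mem_center (hφ : ∀ i, Function.Injective (φ i)) {i j : ι}
    (hij : i ≠ j) {a : G i} (ha : a ∉ (φ i).range) {b : G j} (hb : b ∉ (φ j).range)
    {x : PushoutI φ} (hx : x ∈ Subgroup.center (PushoutI φ)) : x ∈ (base φ).range := by
  rcases mem_range_base_or_exists_isReducedList hφ x with hbase | ⟨p, l, hred, rfl⟩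
  · exact hbase
  exfalso
  have hcomm (c : PushoutI φ) := Subgroup.mem_center_iff.1 hx c
  set q := (p :: l).getLast (List.cons_ne_nil p l) with hq
  have hsplit : (p :: l).dropLast ++ [q] = p :: l := List.dropLast_append_getLast _
  have hq_red : q.2 ∉ (φ q.1).range := hred.2 q (List.getLast_mem _)
  by_cases hpq : p.1 = q.1
  · -- a letter `c` from a factor other than `p.1` gives reduced words `c * x` and `x * c`
    -- starting in different factors
    obtain ⟨m, c, hc, hm⟩ : ∃ m, ∃ c : G m, c ∉ (φ m).range ∧ m ≠ p.1 := by
      by_cases hi : i = p.1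
      · exact ⟨j, b, hb, fun hj => hij (hi.trans hj.symm)⟩
      · exact ⟨i, a, ha, hi⟩
    have hleft := hred.cons (p := ⟨m, c⟩) hc (by simpa using hm)
    have hright := hred.concat (p := ⟨m, c⟩) hc (by
      rw [List.getLast?_eq_some_getLast (List.cons_ne_nil p l), ← hq]
      simpa [← hpq] using hm.symm)
    have hfst := IsReducedList.map_fst_eq hφ hleft hright (by
      rw [listProd_cons, hcomm, listProd_append]
      simp)
    simp only [List.map_cons, List.cons_append, List.cons.injEq] at hfst
    exact hm hfst.1
  · -- the reduced word of `q.2⁻¹ * x` is one letter longer than that of `x`, while that of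
    -- `x * q.2⁻¹` is one letter shorter
    have hleft := hred.cons (p := ⟨q.1, q.2⁻¹⟩) (by simpa using hq_red) (by simpa using Ne.symm hpq)
    have hfst := IsReducedList.map_fst_eq hφ hleft hred.dropLast (by
      rw [listProd_cons, hcomm, ← hsplit]
      simp)
    have hlen := congrArg List.length hfst
    simp only [List.length_map, List.length_cons, List.length_dropLast] at hlen
    omega

end Monoid.PushoutI

namespace MonoidHom

variable {A B : Type*} [Group A] [Group B] {q : A →* B}

lemma map_mem_center_of_surjective (hq : Function.Surjective q) {x : A}
    (hx : x ∈ Subgroup.center A) : q x ∈ Subgroup.center B :=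
  Subgroup.mem_center_iff.2 fun y => by
    obtain ⟨z, rfl⟩ := hq y
    rw [← map_mul, ← map_mul, Subgroup.mem_center_iff.1 hx z]

theorem exists_mulAut_comp_eq (hq : Function.Surjective q) [q.ker.Characteristic]
    (φ : MulAut A) : ∃ ψ : MulAut B, ∀ g, q (φ g) = ψ (q g) := by
  let e := QuotientGroup.quotientKerEquivOfSurjective q hq
  refine ⟨(e.symm.trans (QuotientGroup.congr q.ker q.ker φ ?_)).trans e, fun g => ?_⟩
  · exact Subgroup.characteristic_iff_map_eq.1 ‹_› φ
  · have hg : e.symm (q g) = g := e.symm_apply_eq.2 rfl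
    simp only [MulEquiv.trans_apply, hg]
    rfl

lemma conj_of_comp_eq_conj (hq : Function.Surjective q) {φ : MulAut A} {ψ : MulAut B}
    (h : ∀ g, q (φ g) = ψ (q g)) {a : A} (ha : ∀ g, φ g = a * g * a⁻¹) (y : B) :
    ψ y = q a * y * (q a)⁻¹ := by
  obtain ⟨g, rfl⟩ := hq y
  rw [← h, ha, map_mul, map_mul, map_inv]

end MonoidHom

namespace RAAGPaper

variable {V : Type} {G : SimpleGraph V} {K : Type*} [Group K]

open scoped commutatorElement

variable (G) in
def lift (f : V → K) (hf : ∀ v w, G.Adj v w → Commute (f v) (f w)) : RAAG G →* K :=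
  PresentedGroup.toGroup (rels := raagRels G) (f := f) <| by
    rintro _ ⟨v, w, hvw, rfl⟩
    rw [map_commutatorElement, commutatorElement_eq_one_iff_commute]
    simpa using hf v w hvw

@[simp] lemma lift_gen (f : V → K) (hf : ∀ v w, G.Adj v w → Commute (f v) (f w)) (v : V) :
    lift G f hf (gen G v) = f v :=
  PresentedGroup.toGroup.of _

@[ext] lemma hom_ext {f g : RAAG G →* K} (h : ∀ v, f (gen G v) = g (gen G v)) : f = g :=
  PresentedGroup.ext h

lemma commute_gen {v w : V} (h : G.Adj v w) : Commute (gen G v) (gen G w) := by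
  rw [← commutatorElement_eq_one_iff_commute]
  show PresentedGroup.mk _ ⁅FreeGroup.of v, FreeGroup.of w⁆ = 1
  exact (QuotientGroup.eq_one_iff _).2 (Subgroup.subset_normalClosure ⟨v, w, h, rfl⟩)

lemma sp_univ : sp G Set.univ = ⊤ := by
  rw [sp, Set.image_univ]
  exact PresentedGroup.closure_range_of _

lemma sp_empty : sp G ∅ = ⊥ := by
  simp [sp]

lemma sp_mono {S T : Set V} (h : S ⊆ T) : sp G S ≤ sp G T :=
  Subgroup.closure_mono (Set.image_mono h)

lemma gen_mem_sp {S : Set V} {v : V} (hv : v ∈ S) : gen G v ∈ sp G S :=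
  Subgroup.subset_closure ⟨v, hv, rfl⟩

lemma gen_mem_sp_iff {S : Set V} {v : V} : gen G v ∈ sp G S ↔ v ∈ S := by
  classical
  refine ⟨fun h => ?_, gen_mem_sp⟩
  by_contra hv
  let count : RAAG G →* Multiplicative ℤ :=
    lift G (fun w => if w ∈ S then 1 else .ofAdd 1) fun _ _ _ => .all _ _
  have hS : sp G S ≤ count.ker :=
    Subgroup.closure_le _ |>.2 <| by
      rintro _ ⟨w, hw, rfl⟩
      simp [count, hw]
  simpa [count, hv] using hS h

lemma exists_finset_mem_sp (g : RAAG G) : ∃ s : Finset V, g ∈ sp G s := by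
  classical
  have hg : g ∈ sp G Set.univ := sp_univ (G := G) ▸ Subgroup.mem_top g
  induction hg using Subgroup.closure_induction with
  | mem _ hx =>
    obtain ⟨v, -, rfl⟩ := hx
    exact ⟨{v}, gen_mem_sp (by simp)⟩
  | one => exact ⟨∅, one_mem _⟩
  | mul _ _ _ _ ha hb =>
    obtain ⟨s, hs⟩ := ha
    obtain ⟨t, ht⟩ := hb
    exact ⟨s ∪ t, mul_mem (sp_mono (by simp) hs) (sp_mono (by simp) ht)⟩
  | inv _ _ ha =>
    obtain ⟨s, hs⟩ := ha
    exact ⟨s, inv_mem hs⟩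

lemma sp_le_centralizer {S T : Set V} (h : ∀ u ∈ S, ∀ w ∈ T, Commute (gen G u) (gen G w)) :
    sp G S ≤ Subgroup.centralizer (sp G T) := by
  rw [sp, sp, Subgroup.centralizer_closure]
  refine Subgroup.closure_le _ |>.2 ?_
  rintro _ ⟨u, hu, rfl⟩
  exact Subgroup.mem_centralizer_iff.2 fun _ ⟨w, hw, hgen⟩ => hgen ▸ (h u hu w hw).symm.eq

lemma gen_mem_center {v : V} (hv : ∀ w, w ≠ v → G.Adj v w) :
    gen G v ∈ Subgroup.center (RAAG G) := by
  have h := sp_le_centralizer (G := G) (S := {v}) (T := Set.univ) fun u hu w _ => by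
    rw [Set.mem_singleton_iff.1 hu]
    obtain rfl | hw := eq_or_ne w v
    · exact Commute.refl _
    · exact commute_gen (hv w hw)
  rw [sp_univ, Subgroup.coe_top, Subgroup.centralizer_univ] at h
  exact h (gen_mem_sp rfl)

section Induce

variable (G) in
def ofInduce (S : Set V) : RAAG (G.induce S) →* RAAG G :=
  lift _ (fun u => gen G u) fun _ _ h => commute_gen h

open Classical in
variable (G) in
noncomputable def toInduce (S : Set V) : RAAG G →* RAAG (G.induce S) :=
  lift G (fun v => if h : v ∈ S then gen _ ⟨v, h⟩ else 1) fun v w h => by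
    by_cases hv : v ∈ S <;> by_cases hw : w ∈ S <;> simp only [hv, hw, dite_true, dite_false]
    · exact commute_gen h
    all_goals simp

variable {S : Set V}

@[simp] lemma ofInduce_gen (u : S) : ofInduce G S (gen _ u) = gen G u :=
  lift_gen ..

@[simp] lemma toInduce_gen_of_mem {v : V} (hv : v ∈ S) :
    toInduce G S (gen G v) = gen _ ⟨v, hv⟩ := by
  simp [toInduce, hv]

@[simp] lemma toInduce_gen_of_notMem {v : V} (hv : v ∉ S) : toInduce G S (gen G v) = 1 := by
  simp [toInduce, hv]

@[simp] lemma toInduce_ofInduce (x : RAAG (G.induce S)) : toInduce G S (ofInduce G S x) = x :=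
  DFunLike.congr_fun (f := (toInduce G S).comp (ofInduce G S)) (g := .id _)
    (hom_ext fun u => by simp) x

lemma toInduce_surjective : Function.Surjective (toInduce G S) :=
  fun x => ⟨ofInduce G S x, toInduce_ofInduce x⟩

lemma ofInduce_toInduce_of_mem_sp {g : RAAG G} (hg : g ∈ sp G S) :
    ofInduce G S (toInduce G S g) = g := by
  suffices sp G S ≤ ((ofInduce G S).comp (toInduce G S)).eqLocus (.id _) from this hg
  refine Subgroup.closure_le _ |>.2 ?_
  rintro _ ⟨v, hv, rfl⟩
  show ofInduce G S (toInduce G S (gen G v)) = gen G v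
  simp [hv]

lemma sp_inter {T : Set V} : sp G (S ∩ T) = sp G S ⊓ sp G T := by
  refine le_antisymm (le_inf (sp_mono Set.inter_subset_left) (sp_mono Set.inter_subset_right)) ?_
  rintro g ⟨hS, hT⟩
  rw [← ofInduce_toInduce_of_mem_sp hT]
  suffices sp G S ≤ (sp G (S ∩ T)).comap ((ofInduce G T).comp (toInduce G T)) from this hS
  refine Subgroup.closure_le _ |>.2 ?_
  rintro _ ⟨v, hv, rfl⟩
  by_cases hvT : v ∈ T
  · simpa [hvT] using gen_mem_sp (G := G) (⟨hv, hvT⟩ : v ∈ S ∩ T)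
  · simp [hvT]

theorem ker_toInduce : (toInduce G S).ker = Subgroup.normalClosure (gen G '' Sᶜ) := by
  set N := Subgroup.normalClosure (gen G '' Sᶜ)
  refine le_antisymm (fun g hg => ?_) (Subgroup.normalClosure_le_normal ?_)
  · have hmk : (QuotientGroup.mk' N).comp ((ofInduce G S).comp (toInduce G S)) =
        QuotientGroup.mk' N :=
      hom_ext fun v => by
        by_cases hv : v ∈ S
        · simp [hv]
        · have hN : gen G v ∈ N := Subgroup.subset_normalClosure (Set.mem_image_of_mem _ hv)
          simpa [hv, eq_comm] using (QuotientGroup.eq_one_iff _).2 hN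
    rw [← QuotientGroup.eq_one_iff, ← QuotientGroup.mk'_apply, ← hmk]
    simp [MonoidHom.mem_ker.1 hg]
  · rintro _ ⟨v, hv, rfl⟩
    exact toInduce_gen_of_notMem hv

end Induce

section Amalgam

open Monoid

variable (G) (v : V)

-- `A_Γ = A_{st v} *_{A_{lk v}} A_{Γ - v}`, with the factors realised as special subgroups of `A_Γ`
def side (b : Bool) : Set V := bif b then st G v else {v}ᶜ

lemma lk_subset_side : ∀ b, lk G v ⊆ side G v b
  | false => fun _ hu (huv : _ = v) => G.irrefl (huv ▸ hu)
  | true => Set.subset_insert _ _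

def sideIncl (b : Bool) : sp G (lk G v) →* sp G (side G v b) :=
  Subgroup.inclusion (sp_mono (lk_subset_side G v b))

abbrev Amalgam := PushoutI (sideIncl G v)

open Classical in
noncomputable def amalgamGen (u : V) : Amalgam G v :=
  if h : u = v then PushoutI.of true ⟨gen G u, gen_mem_sp (by subst h; exact Set.mem_insert u _)⟩
  else PushoutI.of false ⟨gen G u, gen_mem_sp h⟩

variable {G v}

lemma of_eq_base {b : Bool} {x : RAAG G} (hx : x ∈ sp G (lk G v)) :
    (PushoutI.of b ⟨x, sp_mono (lk_subset_side G v b) hx⟩ : Amalgam G v) =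
      PushoutI.base _ ⟨x, hx⟩ :=
  PushoutI.of_apply_eq_base (sideIncl G v) b ⟨x, hx⟩

lemma amalgamGen_eq_of_mem_side {b : Bool} {u : V} (hu : u ∈ side G v b) :
    amalgamGen G v u = PushoutI.of b ⟨gen G u, gen_mem_sp hu⟩ := by
  by_cases h : u = v
  · subst h
    cases b
    · exact absurd rfl hu
    · exact dif_pos rfl
  · rw [amalgamGen, dif_neg h]
    cases b
    · rfl
    · have hlk : u ∈ lk G v := (Set.mem_insert_iff.1 hu).resolve_left h
      exact (of_eq_base (gen_mem_sp hlk)).trans (of_eq_base (gen_mem_sp hlk)).symm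

lemma commute_amalgamGen {u w : V} (h : G.Adj u w) :
    Commute (amalgamGen G v u) (amalgamGen G v w) := by
  obtain ⟨b, hu, hw⟩ : ∃ b, u ∈ side G v b ∧ w ∈ side G v b := by
    by_cases hu : u = v
    · exact ⟨true, hu ▸ Set.mem_insert u _, Set.mem_insert_of_mem _ (hu ▸ h)⟩
    by_cases hw : w = v
    · exact ⟨true, Set.mem_insert_of_mem _ (hw ▸ h.symm), hw ▸ Set.mem_insert w _⟩
    exact ⟨false, hu, hw⟩
  rw [amalgamGen_eq_of_mem_side hu, amalgamGen_eq_of_mem_side hw]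
  exact Commute.map (Subtype.ext (commute_gen h).eq) _

variable (G v)

noncomputable def toAmalgam : RAAG G →* Amalgam G v :=
  lift G (amalgamGen G v) fun _ _ h => commute_amalgamGen h

noncomputable def fromAmalgam : Amalgam G v →* RAAG G :=
  PushoutI.lift (fun b => (sp G (side G v b)).subtype) (sp G (lk G v)).subtype
    fun _ => Subgroup.subtype_comp_inclusion _

variable {G v}

@[simp] lemma fromAmalgam_of {b : Bool} (x : sp G (side G v b)) :
    fromAmalgam G v (PushoutI.of b x) = x :=
  PushoutI.lift_of ..

@[simp] lemma fromAmalgam_base (c : sp G (lk G v)) : fromAmalgam G v (PushoutI.base _ c) = c :=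
  PushoutI.lift_base ..

@[simp] lemma fromAmalgam_toAmalgam (g : RAAG G) : fromAmalgam G v (toAmalgam G v g) = g := by
  refine DFunLike.congr_fun (f := (fromAmalgam G v).comp (toAmalgam G v)) (g := .id _)
    (hom_ext fun u => ?_) g
  by_cases h : u = v <;> simp [toAmalgam, amalgamGen, h]

lemma toAmalgam_of_mem_sp {b : Bool} {g : RAAG G} (hg : g ∈ sp G (side G v b)) :
    toAmalgam G v g = PushoutI.of b ⟨g, hg⟩ := by
  induction hg using Subgroup.closure_induction with
  | mem _ hx =>
    obtain ⟨u, hu, rfl⟩ := hx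
    simp [toAmalgam, amalgamGen_eq_of_mem_side hu]
  | one => exact (map_one _).trans (map_one _).symm
  | mul x y _ _ hx hy => rw [map_mul, hx, hy, ← map_mul]; rfl
  | inv x _ hx => rw [map_inv, hx, ← map_inv]; rfl

lemma toAmalgam_surjective : Function.Surjective (toAmalgam G v) := by
  intro y
  induction y using PushoutI.induction_on with
  | of b x => exact ⟨x, toAmalgam_of_mem_sp x.2⟩
  | base c => exact ⟨c, (toAmalgam_of_mem_sp (b := true) _).trans (of_eq_base c.2)⟩
  | mul x y hx hy =>
    obtain ⟨a, rfl⟩ := hx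
    obtain ⟨b, rfl⟩ := hy
    exact ⟨a * b, map_mul ..⟩

lemma mem_range_sideIncl_iff {b : Bool} {x : sp G (side G v b)} :
    x ∈ (sideIncl G v b).range ↔ (x : RAAG G) ∈ sp G (lk G v) := by
  rw [sideIncl, Subgroup.inclusion_range, Subgroup.mem_subgroupOf]

theorem center_le_sp_lk {u : V} (hu : u ≠ v) (hvu : ¬G.Adj v u) :
    Subgroup.center (RAAG G) ≤ sp G (lk G v) := by
  intro g hg
  have hg' := MonoidHom.map_mem_center_of_surjective (toAmalgam_surjective (v := v)) hg
  have ha : (⟨gen G u, gen_mem_sp hu⟩ : sp G (side G v false)) ∉ (sideIncl G v false).range := by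
    rw [mem_range_sideIncl_iff, gen_mem_sp_iff]
    exact hvu
  have hb : (⟨gen G v, gen_mem_sp (Set.mem_insert v _)⟩ : sp G (side G v true)) ∉
      (sideIncl G v true).range := by
    rw [mem_range_sideIncl_iff, gen_mem_sp_iff]
    exact G.irrefl
  obtain ⟨c, hc⟩ := PushoutI.mem_range_base_of_mem_center (φ := sideIncl G v)
    (fun b => Subgroup.inclusion_injective _) Bool.false_ne_true ha hb hg'
  rw [← fromAmalgam_toAmalgam g, ← hc, fromAmalgam_base]
  exact c.2

end Amalgam

theorem center_eq_bot (hG : ∀ v, ∃ u, u ≠ v ∧ ¬G.Adj v u) : Subgroup.center (RAAG G) = ⊥ := by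
  classical
  refine eq_bot_iff.2 fun g hg => ?_
  obtain ⟨s, hs⟩ := exists_finset_mem_sp g
  have hmem (t : Finset V) : g ∈ sp G (↑s ∩ ⋂ v ∈ t, lk G v) := by
    induction t using Finset.induction_on with
    | empty => simpa using hs
    | insert v t _ ih =>
      obtain ⟨u, hu, hvu⟩ := hG v
      rw [Finset.set_biInter_insert, Set.inter_left_comm, sp_inter]
      exact ⟨center_le_sp_lk hu hvu hg, ih⟩
  have hempty : (↑s ∩ ⋂ v ∈ s, lk G v) = ∅ :=
    Set.eq_empty_of_forall_notMem fun u ⟨hu, hlk⟩ => G.irrefl (Set.mem_iInter₂.1 hlk u hu)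
  simpa [hempty, sp_empty] using hmem s

section Join

variable {S : Set V}

lemma ofInduce_mem_sp (x : RAAG (G.induce S)) : ofInduce G S x ∈ sp G S := by
  have hrange : (⊤ : Subgroup (RAAG (G.induce S))).map (ofInduce G S) ≤ sp G S := by
    rw [← sp_univ, sp, MonoidHom.map_closure, ← Set.image_comp]
    exact Subgroup.closure_mono (by rintro _ ⟨u, -, rfl⟩; exact ⟨u, u.2, by simp⟩)
  exact hrange ⟨x, trivial, rfl⟩

lemma toInduce_ofInduce_of_disjoint {T : Set V} (h : Disjoint S T) (x : RAAG (G.induce S)) :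
    toInduce G T (ofInduce G S x) = 1 :=
  DFunLike.congr_fun (f := (toInduce G T).comp (ofInduce G S)) (g := 1)
    (hom_ext fun u => by simpa using toInduce_gen_of_notMem (h.notMem_of_mem_left u.2)) x

lemma commute_ofInduce_ofInduce_compl (hS : ∀ u ∈ S, ∀ w ∉ S, G.Adj u w)
    (x : RAAG (G.induce S)) (y : RAAG (G.induce Sᶜ)) :
    Commute (ofInduce G S x) (ofInduce G Sᶜ y) :=
  (sp_le_centralizer (fun u hu w hw => commute_gen (hS u hu w hw)) (ofInduce_mem_sp x) _
    (ofInduce_mem_sp y)).symm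

variable (G S) in
noncomputable def joinEquiv (hS : ∀ u ∈ S, ∀ w ∉ S, G.Adj u w) :
    RAAG G ≃* RAAG (G.induce S) × RAAG (G.induce Sᶜ) :=
  MonoidHom.toMulEquiv ((toInduce G S).prod (toInduce G Sᶜ))
    ((ofInduce G S).noncommCoprod (ofInduce G Sᶜ) (commute_ofInduce_ofInduce_compl hS))
    (hom_ext fun v => by by_cases hv : v ∈ S <;> simp [hv])
    (MonoidHom.ext fun ⟨x, y⟩ => by
      simp [toInduce_ofInduce_of_disjoint disjoint_compl_right,
        toInduce_ofInduce_of_disjoint disjoint_compl_left])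

theorem exists_mulAut_extend (hS : ∀ u ∈ S, ∀ w ∉ S, G.Adj u w)
    (ψ : MulAut (RAAG (G.induce S))) :
    ∃ φ : MulAut (RAAG G),
      (∀ g, toInduce G S (φ g) = ψ (toInduce G S g)) ∧ ∀ v ∉ S, φ (gen G v) = gen G v := by
  let e := joinEquiv G S hS
  refine ⟨e.trans ((ψ.prodCongr (.refl _)).trans e.symm), fun g => ?_, fun v hv => ?_⟩
  · show (e (e.symm _)).1 = _
    rw [MulEquiv.apply_symm_apply]
    rfl
  · have hfix : ψ.prodCongr (.refl _) (e (gen G v)) = e (gen G v) :=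
      Prod.ext (show ψ (toInduce G S (gen G v)) = toInduce G S (gen G v) by simp [hv]) rfl
    rw [MulEquiv.trans_apply, MulEquiv.trans_apply, hfix, MulEquiv.symm_apply_apply]

end Join

theorem ker_toInduce_compl_eq_center {Z : Set V} (hZ : Z = {v | ∀ w, w ≠ v → G.Adj v w}) :
    (toInduce G Zᶜ).ker = Subgroup.center (RAAG G) := by
  have hZ' : ∀ v ∈ Z, ∀ w, w ≠ v → G.Adj v w := fun v hv => by rw [hZ] at hv; exact hv
  refine le_antisymm ?_ fun g hg => ?_
  · rw [ker_toInduce, compl_compl]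
    refine Subgroup.normalClosure_le_normal ?_
    rintro _ ⟨v, hv, rfl⟩
    exact gen_mem_center (hZ' v hv)
  · have hbot : Subgroup.center (RAAG (G.induce Zᶜ)) = ⊥ := center_eq_bot fun ⟨v, hv⟩ => by
      obtain ⟨w, hwv, hvw⟩ : ∃ w, w ≠ v ∧ ¬G.Adj v w := by simpa [hZ] using hv
      exact ⟨⟨w, fun hw => hvw (hZ' w hw v hwv.symm).symm⟩, fun h => hwv congr($h.1), hvw⟩
    have := MonoidHom.map_mem_center_of_surjective (toInduce_surjective (S := Zᶜ)) hg
    rwa [hbot, Subgroup.mem_bot, ← MonoidHom.mem_ker] at this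

theorem projection_surjective_split_general (G : SimpleGraph V)
    (Z : Set V) (hZdef : Z = {v : V | ∀ w, w ≠ v → G.Adj v w}) :
    ∃ q : RAAG G →* RAAG (SimpleGraph.induce (Zᶜ : Set V) G),
      (∀ (v : V) (hv : v ∈ (Zᶜ : Set V)),
          q (gen G v) = gen (SimpleGraph.induce (Zᶜ : Set V) G) ⟨v, hv⟩) ∧
      (∀ v ∈ Z, q (gen G v) = 1) ∧
      Function.Surjective q ∧
      q.ker = Subgroup.normalClosure (gen G '' Z) ∧
      (∀ φ : MulAut (RAAG G),
          ∃ ψ : MulAut (RAAG (SimpleGraph.induce (Zᶜ : Set V) G)),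
            ∀ g, q (φ g) = ψ (q g)) ∧
      (∀ (φ : MulAut (RAAG G))
          (ψ : MulAut (RAAG (SimpleGraph.induce (Zᶜ : Set V) G))),
          (∀ g, q (φ g) = ψ (q g)) →
          (∃ a, ∀ g, φ g = a * g * a⁻¹) → ∃ b, ∀ h, ψ h = b * h * b⁻¹) ∧
      (∀ ψ : MulAut (RAAG (SimpleGraph.induce (Zᶜ : Set V) G)),
          ∃ φ : MulAut (RAAG G),
            (∀ g, q (φ g) = ψ (q g)) ∧ ∀ v ∈ Z, φ (gen G v) = gen G v) := by
  have hjoin : ∀ u ∈ Zᶜ, ∀ w ∉ Zᶜ, G.Adj u w := fun u hu w hw => by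
    have hwZ : w ∈ Z := Set.notMem_compl_iff.1 hw
    have huw : u ≠ w := fun h => hu (h ▸ hwZ)
    rw [hZdef] at hwZ
    exact (hwZ u huw).symm
  have hq := toInduce_surjective (G := G) (S := Zᶜ)
  have : (toInduce G Zᶜ).ker.Characteristic := by
    rw [ker_toInduce_compl_eq_center hZdef]
    infer_instance
  refine ⟨toInduce G Zᶜ, fun v hv => toInduce_gen_of_mem hv,
    fun v hv => toInduce_gen_of_notMem (Set.notMem_compl_iff.2 hv), hq,
    by rw [ker_toInduce, compl_compl], MonoidHom.exists_mulAut_comp_eq hq,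
    fun φ ψ h ⟨a, ha⟩ => ⟨_, MonoidHom.conj_of_comp_eq_conj hq h ha⟩, fun ψ => ?_⟩
  obtain ⟨φ, hφ, hfix⟩ := exists_mulAut_extend hjoin ψ
  exact ⟨φ, hφ, fun v hv => hfix v (Set.notMem_compl_iff.2 hv)⟩

/-- For `Γ` with nontrivial proper center `Z` and `Δ = Γ - Z`:
the quotient of `A_Γ` by the normal closure of `A_Z` is `A_Δ`, every automorphism
of `A_Γ` descends to `A_Δ`, the induced map on outer automorphism groups is well
defined, and it is surjective with a splitting extending automorphisms of `A_Δ`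
by the identity on `Z`. -/
theorem projection_surjective_split [Fintype V] (G : SimpleGraph V)
    (Z : Set V) (hZdef : Z = {v : V | ∀ w, w ≠ v → G.Adj v w})
    (hne : Z.Nonempty) (hproper : Z ≠ Set.univ) :
    ∃ q : RAAG G →* RAAG (SimpleGraph.induce (Zᶜ : Set V) G),
      (∀ (v : V) (hv : v ∈ (Zᶜ : Set V)),
          q (gen G v) = gen (SimpleGraph.induce (Zᶜ : Set V) G) ⟨v, hv⟩) ∧
      (∀ v ∈ Z, q (gen G v) = 1) ∧
      Function.Surjective q ∧
      q.ker = Subgroup.normalClosure (gen G '' Z) ∧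
      (∀ φ : MulAut (RAAG G),
          ∃ ψ : MulAut (RAAG (SimpleGraph.induce (Zᶜ : Set V) G)),
            ∀ g, q (φ g) = ψ (q g)) ∧
      (∀ (φ : MulAut (RAAG G))
          (ψ : MulAut (RAAG (SimpleGraph.induce (Zᶜ : Set V) G))),
          (∀ g, q (φ g) = ψ (q g)) →
          (∃ a, ∀ g, φ g = a * g * a⁻¹) → ∃ b, ∀ h, ψ h = b * h * b⁻¹) ∧
      (∀ ψ : MulAut (RAAG (SimpleGraph.induce (Zᶜ : Set V) G)),
          ∃ φ : MulAut (RAAG G),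
            (∀ g, q (φ g) = ψ (q g)) ∧ ∀ v ∈ Z, φ (gen G v) = gen G v) :=
  projection_surjective_split_general G Z hZdef

end RAAGPaper
end
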